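/- arXiv:2503.08139 — 3 statements merged into one kernel-verified Lean document; each statement's English description precedes it below -/
import Mathlib

section
/- Let v ∈ S^{n-1} be an incompressible vector in Incomp(δ,ρ). Then there are at least ρ²δn/2 indices i ∈ [n] for which (ρ/2)·n^{-1/2} ≤ |v_i| ≤ δ^{-1/2}·n^{-1/2}. -/
/-- Euclidean norm of a vector. -/
noncomputable def enorm2 {ι : Type*} [Fintype ι] (v : ι → ℝ) : ℝ := Real.sqrt (∑ i, v i ^ 2)

/-- Vectors with at most `δn` nonzero coordinates. -/
noncomputable def SparseVec (n : ℕ) (δ : ℝ) : Set (Fin n → ℝ) :=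
  {x | ((Set.toFinite {i | x i ≠ 0}).toFinset.card : ℝ) ≤ δ * n}

/-- Compressible unit vectors: within distance `ρ` of `Sparse(δ)`. -/
noncomputable def CompVec (n : ℕ) (δ ρ : ℝ) : Set (Fin n → ℝ) :=
  {x | enorm2 x = 1 ∧ ∃ s ∈ SparseVec n δ, enorm2 (x - s) ≤ ρ}

/-- Incompressible unit vectors. -/
noncomputable def IncompVec (n : ℕ) (δ ρ : ℝ) : Set (Fin n → ℝ) :=
  {x | enorm2 x = 1 ∧ x ∉ CompVec n δ ρ}

/-!
Zeroing the coordinates with `|vᵢ| > 1/√(δn)` changes at most `δn` of them, since `‖v‖ = 1`;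
by incompressibility the remaining coordinates therefore carry more than `ρ²` of the mass
`‖v‖² = 1`. Those below `ρ/(2√n)` carry at most `n · ρ²/(4n) = ρ²/4`, so the coordinates in the
window carry more than `3ρ²/4`, and as each contributes at most `1/(δn)`, there are more than
`3ρ²δn/4` of them.
-/

open Finset

section Coordinates

variable {ι : Type*} (v : ι → ℝ)

theorem sum_sq_le_card_mul_sq {s : Finset ι} {t : ℝ} (h : ∀ i ∈ s, |v i| ≤ t) :
    ∑ i ∈ s, v i ^ 2 ≤ #s * t ^ 2 :=
  calc ∑ i ∈ s, v i ^ 2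
      ≤ ∑ _i ∈ s, t ^ 2 := sum_le_sum fun i hi => sq_le_sq.mpr ((h i hi).trans (le_abs_self t))
    _ = #s * t ^ 2 := by rw [sum_const, nsmul_eq_mul]

variable [Fintype ι]

theorem enorm2_eq_one_iff : enorm2 v = 1 ↔ ∑ i, v i ^ 2 = 1 :=
  Real.sqrt_eq_one

theorem lt_enorm2_iff {r : ℝ} (hr : 0 ≤ r) : r < enorm2 v ↔ r ^ 2 < ∑ i, v i ^ 2 :=
  Real.lt_sqrt hr

theorem card_filter_lt_abs_mul_sq_le {t : ℝ} (ht : 0 ≤ t) :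
    (#{i | t < |v i|} : ℝ) * t ^ 2 ≤ ∑ i, v i ^ 2 := by
  calc (#{i | t < |v i|} : ℝ) * t ^ 2
      = ∑ _i ∈ {i | t < |v i|}, t ^ 2 := by rw [sum_const, nsmul_eq_mul]
    _ ≤ ∑ i ∈ {i | t < |v i|}, v i ^ 2 :=
        sum_le_sum fun i hi => by
          rw [← sq_abs (v i)]; exact pow_le_pow_left₀ ht (mem_filter.mp hi).2.le 2
    _ ≤ ∑ i, v i ^ 2 := sum_le_univ_sum_of_nonneg fun i => sq_nonneg _

noncomputable def largePart (t : ℝ) : ι → ℝ := fun i => if t < |v i| then v i else 0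

theorem card_support_largePart_le (t : ℝ) :
    (Set.toFinite {i | largePart v t i ≠ 0}).toFinset.card ≤ #{i | t < |v i|} := by
  rw [Set.Finite.toFinset_ofPred]
  refine card_le_card fun i => ?_
  simp only [mem_filter, mem_univ, true_and]
  exact fun hi => by_contra fun h => hi (if_neg h)

theorem sum_sq_sub_largePart (t : ℝ) :
    ∑ i, (v - largePart v t) i ^ 2 = ∑ i with |v i| ≤ t, v i ^ 2 := by
  rw [sum_filter]
  refine sum_congr rfl fun i _ => ?_
  by_cases h : t < |v i| <;> simp [largePart, h, le_of_not_gt]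

theorem sum_sq_filter_abs_le_le (L U : ℝ) :
    ∑ i with |v i| ≤ U, v i ^ 2 ≤
      (#{i | L ≤ |v i| ∧ |v i| ≤ U} : ℝ) * U ^ 2 + Fintype.card ι * L ^ 2 := by
  rw [← sum_filter_add_sum_filter_not _ (fun i => L ≤ |v i|), filter_filter, filter_filter]
  gcongr ?_ + ?_
  · calc _ ≤ (#{i | |v i| ≤ U ∧ L ≤ |v i|} : ℝ) * U ^ 2 :=
          sum_sq_le_card_mul_sq v fun i hi => (mem_filter.mp hi).2.1
      _ = _ := by simp only [and_comm]
  · calc _ ≤ (#{i | |v i| ≤ U ∧ ¬L ≤ |v i|} : ℝ) * L ^ 2 :=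
          sum_sq_le_card_mul_sq v fun i hi => (not_le.mp (mem_filter.mp hi).2.2).le
      _ ≤ Fintype.card ι * L ^ 2 := by gcongr; exact card_le_univ _

end Coordinates

theorem lt_enorm2_sub_of_mem_incompVec {n : ℕ} {δ ρ : ℝ} {v s : Fin n → ℝ}
    (hv : v ∈ IncompVec n δ ρ) (hs : s ∈ SparseVec n δ) : ρ < enorm2 (v - s) :=
  not_le.mp fun h => hv.2 ⟨hv.1, s, hs, h⟩

/-- spread property of incompressible vectors: if `v ∈ Incomp(δ,ρ)` then at
least `ρ²δn/2` coordinates satisfy `ρ/(2√n) ≤ |v_i| ≤ 1/(√δ √n)`. -/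
theorem stmt4
    (n : ℕ) (δ ρ : ℝ) (hδ : δ ∈ Set.Ioo (0:ℝ) 1) (hρ : ρ ∈ Set.Ioo (0:ℝ) 1)
    (v : Fin n → ℝ) (hv : v ∈ IncompVec n δ ρ) :
    ρ ^ 2 * δ * n / 2 ≤
      ((Set.toFinite {i : Fin n |
        (ρ / 2) / Real.sqrt n ≤ |v i| ∧ |v i| ≤ (Real.sqrt δ)⁻¹ / Real.sqrt n}).toFinset.card : ℝ) := by
  have hsum : ∑ i, v i ^ 2 = 1 := (enorm2_eq_one_iff v).mp hv.1
  have hn : (0 : ℝ) < n := Nat.cast_pos.mpr (Nat.pos_of_ne_zero (by rintro rfl; simp at hsum))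
  set U := (Real.sqrt δ)⁻¹ / Real.sqrt n
  set L := (ρ / 2) / Real.sqrt n
  have hU : U ^ 2 = (δ * n)⁻¹ := by
    rw [div_pow, inv_pow, Real.sq_sqrt hδ.1.le, Real.sq_sqrt hn.le, mul_inv, div_eq_mul_inv]
  have hL : n * L ^ 2 = ρ ^ 2 / 4 := by
    rw [div_pow, div_pow, Real.sq_sqrt hn.le]; field_simp; ring
  have hδn : 0 < δ * n := mul_pos hδ.1 hn
  have hsparse : largePart v U ∈ SparseVec n δ := by
    have hbig := card_filter_lt_abs_mul_sq_le v (t := U) (by positivity)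
    rw [hsum, hU, ← div_eq_mul_inv, div_le_one hδn] at hbig
    exact (Nat.cast_le.mpr (card_support_largePart_le v U)).trans hbig
  have hfar := (lt_enorm2_iff _ hρ.1.le).mp (lt_enorm2_sub_of_mem_incompVec hv hsparse)
  rw [sum_sq_sub_largePart] at hfar
  have hmid := hfar.trans_le (sum_sq_filter_abs_le_le v L U)
  rw [hU, Fintype.card_fin, hL, ← div_eq_mul_inv] at hmid
  rw [Set.Finite.toFinset_ofPred]
  have hcard := (lt_div_iff₀ hδn).mp
    (by linarith : 3 / 4 * ρ ^ 2 < (#{i | L ≤ |v i| ∧ |v i| ≤ U} : ℝ) / (δ * n))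
  linarith [mul_nonneg (sq_nonneg ρ) hδn.le]
end

section
/- Let A be an n × n real symmetric matrix. Suppose λ_{i+k}(A) − λ_i(A) ≤ ε (eigenvalues in increasing order), where i + k ≤ n. Let v₁,…,v_k be orthonormal eigenvectors of the top-left (n−1) × (n−1) principal submatrix A_{n−1} corresponding to λ_i(A_{n−1}),…,λ_{i+k−1}(A_{n−1}). Write the last column of A as (Xᵀ, a_{nn}) and let u = (wᵀ, b)ᵀ be a unit eigenvector of A with eigenvalue λ_i(A). Then for every j ∈ [k]: |b|·|v_jᵀX| ≤ |λ_{i+j−1}(A_{n−1}) − λ_i(A)| ≤ ε, where the last inequality uses Cauchy interlacing (λ_i(A) ≤ λ_i(A_{n−1}) ≤ … ≤ λ_{i+k−1}(A_{n−1}) ≤ λ_{i+k}(A)). -/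
open Matrix

/-- Eigenvalues of a real symmetric matrix, sorted in increasing order
(`eigAsc hA j` = `λ_{j+1}` in the paper's 1-indexed notation). -/
noncomputable def eigAsc {n : ℕ} {A : Matrix (Fin n) (Fin n) ℝ} (hA : A.IsHermitian) :
    Fin n → ℝ :=
  hA.eigenvalues ∘ Tuple.sort hA.eigenvalues

/-!
The first inequality comes from the first `n` rows of `A u = λ u`, namely `B w + b X = λ w`:
pairing with `v_j` and using the symmetry of `B` gives `b ⟪v_j, X⟫ = (λ - μ_j) ⟪v_j, w⟫`, and
`|⟪v_j, w⟫| ≤ 1` by Cauchy–Schwarz.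

The second is Cauchy interlacing `λ_m(A) ≤ λ_m(B) ≤ λ_{m+1}(A)`. For the left inequality, ask
`y ∈ ℝⁿ` to be orthogonal to the (truncated) eigenvectors of `A` below `m` and to those of `B`
above `m`: these are only `n - 1` linear conditions, so some `y ≠ 0` satisfies them, and the
Rayleigh quotient of `B` at `y` equals that of `A` at `(y, 0)`, which is squeezed between
`λ_m(A)` and `λ_m(B)`. The right inequality is symmetric.
-/

theorem exists_ne_zero_forall_dotProduct_eq_zero {K ι : Type*} [Field K] [Fintype ι]
    (S : Finset (ι → K)) (hS : S.card < Fintype.card ι) : ∃ x ≠ 0, ∀ a ∈ S, a ⬝ᵥ x = 0 := by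
  let f : (ι → K) →ₗ[K] (S → K) := (Matrix.of fun (a : S) => (a : ι → K)).mulVecLin
  have hker : LinearMap.ker f ≠ ⊥ := LinearMap.ker_ne_bot_of_finrank_lt (by simpa using hS)
  obtain ⟨x, hx, hx0⟩ := (Submodule.ne_bot_iff _).mp hker
  exact ⟨x, hx0, fun a ha => congrFun (LinearMap.mem_ker.mp hx) ⟨a, ha⟩⟩

theorem sq_dotProduct_le {ι : Type*} [Fintype ι] (v w : ι → ℝ) :
    (v ⬝ᵥ w) ^ 2 ≤ (v ⬝ᵥ v) * (w ⬝ᵥ w) := by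
  simpa only [dotProduct, sq] using Finset.sum_mul_sq_le_sq_mul_sq Finset.univ v w

section Bordered

variable {N : ℕ}

theorem dotProduct_snoc_zero {R : Type*} [NonUnitalNonAssocSemiring R]
    (z : Fin (N + 1) → R) (y : Fin N → R) :
    z ⬝ᵥ Fin.snoc y 0 = (z ∘ Fin.castSucc) ⬝ᵥ y := by
  simp [dotProduct, Fin.sum_univ_castSucc]

theorem snoc_zero_dotProduct_mulVec_snoc_zero {R : Type*} [NonUnitalNonAssocSemiring R]
    (A : Matrix (Fin (N + 1)) (Fin (N + 1)) R) (y : Fin N → R) :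
    Fin.snoc y 0 ⬝ᵥ (A *ᵥ Fin.snoc y 0) =
      y ⬝ᵥ (A.submatrix Fin.castSucc Fin.castSucc *ᵥ y) := by
  simp [dotProduct, mulVec, Fin.sum_univ_castSucc]

theorem mulVec_comp_castSucc {R : Type*} [CommSemiring R]
    (A : Matrix (Fin (N + 1)) (Fin (N + 1)) R) (u : Fin (N + 1) → R) :
    (A *ᵥ u) ∘ Fin.castSucc = A.submatrix Fin.castSucc Fin.castSucc *ᵥ (u ∘ Fin.castSucc) +
      u (Fin.last N) • fun r => A r.castSucc (Fin.last N) := by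
  funext r
  simp [mulVec, dotProduct, Fin.sum_univ_castSucc, mul_comm]

theorem dotProduct_self_comp_castSucc_le (u : Fin (N + 1) → ℝ) :
    (u ∘ Fin.castSucc) ⬝ᵥ (u ∘ Fin.castSucc) ≤ u ⬝ᵥ u := by
  simp only [dotProduct, Fin.sum_univ_castSucc (fun r => u r * u r), Function.comp_apply]
  linarith [mul_self_nonneg (u (Fin.last N))]

end Bordered

section SortedEigenvectors

variable {N : ℕ} {M : Matrix (Fin N) (Fin N) ℝ} (hM : M.IsHermitian)

noncomputable def sortedEigenvector (j : Fin N) : Fin N → ℝ :=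
  ⇑(hM.eigenvectorBasis (Tuple.sort hM.eigenvalues j))

theorem mulVec_sortedEigenvector (j : Fin N) :
    M *ᵥ sortedEigenvector hM j = eigAsc hM j • sortedEigenvector hM j :=
  hM.mulVec_eigenvectorBasis _

theorem monotone_eigAsc : Monotone (eigAsc hM) := Tuple.monotone_sort _

theorem sum_sortedEigenvector_dotProduct_mul (x y : Fin N → ℝ) :
    ∑ j, (sortedEigenvector hM j ⬝ᵥ x) * (sortedEigenvector hM j ⬝ᵥ y) = x ⬝ᵥ y := by
  have h := hM.eigenvectorBasis.sum_inner_mul_inner (WithLp.toLp 2 x) (WithLp.toLp 2 y)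
  simp only [EuclideanSpace.inner_eq_star_dotProduct, star_trivial] at h
  rw [← Equiv.sum_comp (Tuple.sort hM.eigenvalues)] at h
  simpa [sortedEigenvector, dotProduct_comm] using h

theorem dotProduct_mulVec_eq_sum_eigAsc (x : Fin N → ℝ) :
    x ⬝ᵥ (M *ᵥ x) = ∑ j, eigAsc hM j * (sortedEigenvector hM j ⬝ᵥ x) ^ 2 := by
  rw [← sum_sortedEigenvector_dotProduct_mul hM]
  refine Finset.sum_congr rfl fun j _ => ?_
  have hsymm : sortedEigenvector hM j ⬝ᵥ (M *ᵥ x) = (M *ᵥ sortedEigenvector hM j) ⬝ᵥ x := by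
    rw [dotProduct_mulVec, ← mulVec_transpose, (isHermitian_iff_isSymm.mp hM).eq]
  rw [hsymm, mulVec_sortedEigenvector, smul_dotProduct, smul_eq_mul]
  ring

theorem eigAsc_mul_dotProduct_self_le (x : Fin N → ℝ) (m : Fin N)
    (hx : ∀ t < m, sortedEigenvector hM t ⬝ᵥ x = 0) :
    eigAsc hM m * (x ⬝ᵥ x) ≤ x ⬝ᵥ (M *ᵥ x) := by
  rw [dotProduct_mulVec_eq_sum_eigAsc hM, ← sum_sortedEigenvector_dotProduct_mul hM,
    Finset.mul_sum]
  refine Finset.sum_le_sum fun j _ => ?_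
  rcases lt_or_ge j m with hj | hj
  · simp [hx j hj]
  · rw [← sq]
    exact mul_le_mul_of_nonneg_right (monotone_eigAsc hM hj) (sq_nonneg _)

theorem dotProduct_mulVec_le_eigAsc_mul_dotProduct_self (x : Fin N → ℝ) (m : Fin N)
    (hx : ∀ t, m < t → sortedEigenvector hM t ⬝ᵥ x = 0) :
    x ⬝ᵥ (M *ᵥ x) ≤ eigAsc hM m * (x ⬝ᵥ x) := by
  rw [dotProduct_mulVec_eq_sum_eigAsc hM, ← sum_sortedEigenvector_dotProduct_mul hM,
    Finset.mul_sum]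
  refine Finset.sum_le_sum fun j _ => ?_
  rcases lt_or_ge m j with hj | hj
  · simp [hx j hj]
  · rw [← sq]
    exact mul_le_mul_of_nonneg_right (monotone_eigAsc hM hj) (sq_nonneg _)

end SortedEigenvectors

section Interlacing

variable {N : ℕ} {A : Matrix (Fin (N + 1)) (Fin (N + 1)) ℝ} (hA : A.IsHermitian)

theorem eigAsc_castSucc_le_eigAsc_submatrix (m : Fin N) :
    eigAsc hA m.castSucc ≤ eigAsc (hA.submatrix Fin.castSucc) m := by
  classical
  set hB := hA.submatrix Fin.castSucc
  let S : Finset (Fin N → ℝ) :=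
    (Finset.Iio m.castSucc).image (fun t => sortedEigenvector hA t ∘ Fin.castSucc) ∪
      (Finset.Ioi m).image (sortedEigenvector hB)
  have hS : S.card < Fintype.card (Fin N) :=
    calc S.card ≤ (Finset.Iio m.castSucc).card + (Finset.Ioi m).card :=
          (Finset.card_union_le _ _).trans (add_le_add Finset.card_image_le Finset.card_image_le)
      _ < Fintype.card (Fin N) := by
          simp only [Fin.card_Iio, Fin.card_Ioi, Fin.val_castSucc, Fintype.card_fin]
          omega
  obtain ⟨y, hy0, hy⟩ := exists_ne_zero_forall_dotProduct_eq_zero S hS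
  have hleA := eigAsc_mul_dotProduct_self_le hA (Fin.snoc y 0) m.castSucc fun t ht => by
    rw [dotProduct_snoc_zero]
    exact hy _ (Finset.mem_union_left _ (Finset.mem_image_of_mem _ (Finset.mem_Iio.2 ht)))
  have hleB := dotProduct_mulVec_le_eigAsc_mul_dotProduct_self hB y m fun t ht =>
    hy _ (Finset.mem_union_right _ (Finset.mem_image_of_mem _ (Finset.mem_Ioi.2 ht)))
  rw [snoc_zero_dotProduct_mulVec_snoc_zero, dotProduct_snoc_zero, Fin.snoc_comp_castSucc]
    at hleA
  exact le_of_mul_le_mul_right (hleA.trans hleB)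
    (by simpa using dotProduct_star_self_pos_iff.mpr hy0)

theorem eigAsc_submatrix_le_eigAsc_succ (m : Fin N) :
    eigAsc (hA.submatrix Fin.castSucc) m ≤ eigAsc hA m.succ := by
  classical
  set hB := hA.submatrix Fin.castSucc
  let S : Finset (Fin N → ℝ) :=
    (Finset.Ioi m.succ).image (fun t => sortedEigenvector hA t ∘ Fin.castSucc) ∪
      (Finset.Iio m).image (sortedEigenvector hB)
  have hS : S.card < Fintype.card (Fin N) :=
    calc S.card ≤ (Finset.Ioi m.succ).card + (Finset.Iio m).card :=
          (Finset.card_union_le _ _).trans (add_le_add Finset.card_image_le Finset.card_image_le)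
      _ < Fintype.card (Fin N) := by
          simp only [Fin.card_Iio, Fin.card_Ioi, Fin.val_succ, Fintype.card_fin]
          omega
  obtain ⟨y, hy0, hy⟩ := exists_ne_zero_forall_dotProduct_eq_zero S hS
  have hleA := dotProduct_mulVec_le_eigAsc_mul_dotProduct_self hA (Fin.snoc y 0) m.succ
    fun t ht => by
      rw [dotProduct_snoc_zero]
      exact hy _ (Finset.mem_union_left _ (Finset.mem_image_of_mem _ (Finset.mem_Ioi.2 ht)))
  have hleB := eigAsc_mul_dotProduct_self_le hB y m fun t ht =>
    hy _ (Finset.mem_union_right _ (Finset.mem_image_of_mem _ (Finset.mem_Iio.2 ht)))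
  rw [snoc_zero_dotProduct_mulVec_snoc_zero, dotProduct_snoc_zero, Fin.snoc_comp_castSucc]
    at hleA
  exact le_of_mul_le_mul_right (hleB.trans hleA)
    (by simpa using dotProduct_star_self_pos_iff.mpr hy0)

end Interlacing

section LastColumn

variable {N : ℕ}

theorem last_mul_dotProduct_lastCol_eq {R : Type*} [CommRing R]
    {A : Matrix (Fin (N + 1)) (Fin (N + 1)) R}
    (hB : (A.submatrix Fin.castSucc Fin.castSucc).IsSymm)
    {u : Fin (N + 1) → R} {v : Fin N → R} {lam mu : R} (hu : A *ᵥ u = lam • u)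
    (hv : A.submatrix Fin.castSucc Fin.castSucc *ᵥ v = mu • v) :
    u (Fin.last N) * (v ⬝ᵥ fun r => A r.castSucc (Fin.last N)) =
      (lam - mu) * (v ⬝ᵥ (u ∘ Fin.castSucc)) := by
  have hrows := congrArg (v ⬝ᵥ ·) (mulVec_comp_castSucc A u)
  rw [hu, Pi.smul_comp, dotProduct_add, dotProduct_mulVec, ← mulVec_transpose, hB.eq, hv]
    at hrows
  simp only [dotProduct_smul, smul_dotProduct, smul_eq_mul] at hrows
  linear_combination -hrows

theorem abs_last_mul_abs_dotProduct_lastCol_le {A : Matrix (Fin (N + 1)) (Fin (N + 1)) ℝ}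
    (hB : (A.submatrix Fin.castSucc Fin.castSucc).IsSymm)
    {u : Fin (N + 1) → ℝ} {v : Fin N → ℝ} {lam mu : ℝ} (hu : A *ᵥ u = lam • u)
    (hv : A.submatrix Fin.castSucc Fin.castSucc *ᵥ v = mu • v) (hu1 : u ⬝ᵥ u = 1)
    (hv1 : v ⬝ᵥ v = 1) :
    |u (Fin.last N)| * |v ⬝ᵥ fun r => A r.castSucc (Fin.last N)| ≤ |mu - lam| := by
  have hvw : |v ⬝ᵥ (u ∘ Fin.castSucc)| ≤ 1 := by
    rw [← sq_le_one_iff_abs_le_one]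
    calc (v ⬝ᵥ (u ∘ Fin.castSucc)) ^ 2
        ≤ (v ⬝ᵥ v) * ((u ∘ Fin.castSucc) ⬝ᵥ (u ∘ Fin.castSucc)) := sq_dotProduct_le _ _
      _ ≤ 1 := by rw [hv1, one_mul, ← hu1]; exact dotProduct_self_comp_castSucc_le u
  calc |u (Fin.last N)| * |v ⬝ᵥ fun r => A r.castSucc (Fin.last N)|
      = |mu - lam| * |v ⬝ᵥ (u ∘ Fin.castSucc)| := by
        rw [← abs_mul, last_mul_dotProduct_lastCol_eq hB hu hv, abs_mul, abs_sub_comm]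
    _ ≤ |mu - lam| := mul_le_of_le_one_right (abs_nonneg _) hvw

end LastColumn

/-- For a symmetric `(n+1) × (n+1)` matrix `A` with principal submatrix `B`,
off-diagonal last column `X`, unit eigenvector `u = (w, b)` for `λ_i(A)`, and
orthonormal eigenvectors `v_j` of `B` for `λ_{i+j}(B)`, `j = 0,…,k−1`: whenever
`λ_{i+k}(A) − λ_i(A) ≤ ε`, each `j` satisfies
`|b|·|v_jᵀX| ≤ |λ_{i+j}(B) − λ_i(A)| ≤ ε` (using Cauchy interlacing). -/
theorem stmt11
    (n : ℕ) (A : Matrix (Fin (n + 1)) (Fin (n + 1)) ℝ) (hA : A.IsHermitian)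
    (B : Matrix (Fin n) (Fin n) ℝ)
    (hB : B = A.submatrix Fin.castSucc Fin.castSucc) (hBH : B.IsHermitian)
    (X : Fin n → ℝ) (hX : X = fun j => A (Fin.castSucc j) (Fin.last n))
    (i k : ℕ) (hik : i + k ≤ n) (ε : ℝ)
    (hgap : eigAsc hA ⟨i + k, by omega⟩ - eigAsc hA ⟨i, by omega⟩ ≤ ε)
    (u : Fin (n + 1) → ℝ) (hu : enorm2 u = 1)
    (hue : A.mulVec u = fun r => eigAsc hA ⟨i, by omega⟩ * u r)
    (v : Fin k → Fin n → ℝ)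
    (horth : ∀ j j' : Fin k, v j ⬝ᵥ v j' = if j = j' then (1 : ℝ) else 0)
    (hve : ∀ j : Fin k,
      B.mulVec (v j) = fun r => eigAsc hBH ⟨i + j, by have := j.2; omega⟩ * v j r) :
    ∀ j : Fin k,
      |u (Fin.last n)| * |v j ⬝ᵥ X|
          ≤ |eigAsc hBH ⟨i + j, by have := j.2; omega⟩ - eigAsc hA ⟨i, by omega⟩| ∧
      |eigAsc hBH ⟨i + j, by have := j.2; omega⟩ - eigAsc hA ⟨i, by omega⟩| ≤ ε := by
  intro j
  subst hB hX
  have hu1 : u ⬝ᵥ u = 1 := by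
    rw [enorm2, Real.sqrt_eq_one] at hu
    simpa only [dotProduct, sq] using hu
  have hv1 : v j ⬝ᵥ v j = 1 := by simpa using horth j j
  have hlow : eigAsc hA ⟨i, by omega⟩ ≤ eigAsc hBH ⟨i + j, by omega⟩ :=
    (monotone_eigAsc hA (by simp [Fin.le_def])).trans
      (eigAsc_castSucc_le_eigAsc_submatrix hA ⟨i + j, by omega⟩)
  have hhigh : eigAsc hBH ⟨i + j, by omega⟩ ≤ eigAsc hA ⟨i + k, by omega⟩ :=
    (eigAsc_submatrix_le_eigAsc_succ hA ⟨i + j, by omega⟩).trans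
      (monotone_eigAsc hA (by simp [Fin.le_def]))
  refine ⟨abs_last_mul_abs_dotProduct_lastCol_le (isHermitian_iff_isSymm.mp hBH) hue (hve j)
    hu1 hv1, ?_⟩
  rw [abs_of_nonneg (sub_nonneg.mpr hlow)]
  linarith
end

section
/- Let M and M' be i.i.d. random matrices of size m × n, and let X ∈ ℝⁿ be arranged in blocks X = (X_{[d]}, X_{[d+1,m]}, X_{[m+1,n]}) compatible with the zeroed-out block structure M = [[0, H₁ᵀ, 0],[H₁, 0, 0]] where H₁ is (m−d) × d. Define H := [H₁, H₂] where H₂ is the corresponding block of M'. Then P(‖MX‖₂ ≤ 2m)² ≤ P( ‖H₁X_{[d]}‖₂ ≤ 2m and ‖H₂X_{[d]}‖₂ ≤ 2m and ‖HᵀX_{[d+1,m]}‖₂ ≤ 4m ). -/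
open MeasureTheory ProbabilityTheory Matrix

/-- The "zeroed-out" block matrix `M = [[0, H₁ᵀ, 0], [H₁, 0, 0]]` of size
`(d + e) × (d + e + k)`, built from an `e × d` matrix `H₁` (here `e = m − d`). -/
def zeroedOut {d e k : ℕ} (H₁ : Matrix (Fin e) (Fin d) ℝ) :
    Matrix (Fin d ⊕ Fin e) (Fin d ⊕ (Fin e ⊕ Fin k)) ℝ :=
  fun r c =>
    match r, c with
    | Sum.inl i, Sum.inr (Sum.inl j) => H₁ j i
    | Sum.inr j, Sum.inl i => H₁ j i
    | _, _ => 0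

instance {e d : ℕ} : MeasurableSpace (Matrix (Fin e) (Fin d) ℝ) :=
  inferInstanceAs (MeasurableSpace (Fin e → Fin d → ℝ))

/-! Since `‖MX‖² = ‖H₁ᵀX_{[d+1,m]}‖² + ‖H₁X_{[d]}‖²`, the event `‖MX‖ ≤ 2m` forces both block
norms below `2m`, an event `{H₁ ∈ S}` that depends on `H₁` alone. For an independent copy `H₂`,
`P(H₁ ∈ S)² = P(H₁ ∈ S, H₂ ∈ S)`, and on that event `‖HᵀX_{[d+1,m]}‖ ≤ 2m + 2m`. -/

lemma enorm2_nonneg {ι : Type*} [Fintype ι] (v : ι → ℝ) : 0 ≤ enorm2 v :=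
  Real.sqrt_nonneg _

lemma enorm2_sq {ι : Type*} [Fintype ι] (v : ι → ℝ) : enorm2 v ^ 2 = ∑ i, v i ^ 2 :=
  Real.sq_sqrt (Finset.sum_nonneg fun _ _ => sq_nonneg _)

lemma sqrt_sq_add_sq_le_add {a b : ℝ} (ha : 0 ≤ a) (hb : 0 ≤ b) : √(a ^ 2 + b ^ 2) ≤ a + b :=
  Real.sqrt_le_iff.2 ⟨by positivity, by nlinarith⟩

lemma measurable_enorm2_mulVec {d e : ℕ} (v : Fin d → ℝ) :
    Measurable fun A : Matrix (Fin e) (Fin d) ℝ => enorm2 (A *ᵥ v) := by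
  refine Real.continuous_sqrt.measurable.comp ?_
  simp only [mulVec, dotProduct]
  fun_prop

lemma measurable_enorm2_transpose_mulVec {d e : ℕ} (v : Fin e → ℝ) :
    Measurable fun A : Matrix (Fin e) (Fin d) ℝ => enorm2 (Aᵀ *ᵥ v) := by
  refine Real.continuous_sqrt.measurable.comp ?_
  simp only [mulVec, dotProduct, transpose_apply]
  fun_prop

section zeroedOut

variable {d e k : ℕ} (A : Matrix (Fin e) (Fin d) ℝ) (X : Fin d ⊕ (Fin e ⊕ Fin k) → ℝ)

lemma enorm2_zeroedOut_mulVec_sq :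
    enorm2 (zeroedOut A *ᵥ X) ^ 2 =
      enorm2 (Aᵀ *ᵥ fun j => X (Sum.inr (Sum.inl j))) ^ 2 +
        enorm2 (A *ᵥ fun i => X (Sum.inl i)) ^ 2 := by
  simp only [enorm2_sq, Fintype.sum_sum_type]
  simp [zeroedOut, mulVec, dotProduct, Fintype.sum_sum_type, transpose_apply]

lemma enorm2_mulVec_le_enorm2_zeroedOut_mulVec :
    enorm2 (A *ᵥ fun i => X (Sum.inl i)) ≤ enorm2 (zeroedOut A *ᵥ X) :=
  (pow_le_pow_iff_left₀ (enorm2_nonneg _) (enorm2_nonneg _) two_ne_zero).1 <| by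
    rw [enorm2_zeroedOut_mulVec_sq]
    exact le_add_of_nonneg_left (sq_nonneg _)

lemma enorm2_transpose_mulVec_le_enorm2_zeroedOut_mulVec :
    enorm2 (Aᵀ *ᵥ fun j => X (Sum.inr (Sum.inl j))) ≤ enorm2 (zeroedOut A *ᵥ X) :=
  (pow_le_pow_iff_left₀ (enorm2_nonneg _) (enorm2_nonneg _) two_ne_zero).1 <| by
    rw [enorm2_zeroedOut_mulVec_sq]
    exact le_add_of_nonneg_right (sq_nonneg _)

end zeroedOut

lemma ProbabilityTheory.IndepFun.measure_inter_preimage_eq_sq {Ω α : Type*}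
    [MeasurableSpace Ω] [MeasurableSpace α] {μ : Measure Ω} {f g : Ω → α}
    (hindep : IndepFun f g μ) (hcopy : IdentDistrib g f μ μ) {S : Set α} (hS : MeasurableSet S) :
    μ (f ⁻¹' S ∩ g ⁻¹' S) = μ (f ⁻¹' S) ^ 2 := by
  rw [hindep.measure_inter_preimage_eq_mul S S hS hS, hcopy.measure_mem_eq hS, sq]

theorem stmt14_general
    {Ω : Type*} [MeasurableSpace Ω] (μ : Measure Ω)
    (d e k : ℕ)
    (H₁ H₂ : Ω → Matrix (Fin e) (Fin d) ℝ)
    (hindep : IndepFun H₁ H₂ μ) (hcopy : IdentDistrib H₂ H₁ μ μ)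
    (X : (Fin d ⊕ (Fin e ⊕ Fin k)) → ℝ)
    (Xd : Fin d → ℝ) (hXd : Xd = fun i => X (Sum.inl i))
    (Xe : Fin e → ℝ) (hXe : Xe = fun j => X (Sum.inr (Sum.inl j))) :
    (μ {ω | enorm2 ((zeroedOut (H₁ ω)).mulVec X) ≤ 2 * (d + e : ℝ)}) ^ 2
      ≤ μ {ω | enorm2 ((H₁ ω).mulVec Xd) ≤ 2 * (d + e : ℝ) ∧
               enorm2 ((H₂ ω).mulVec Xd) ≤ 2 * (d + e : ℝ) ∧
               Real.sqrt (enorm2 ((H₁ ω)ᵀ.mulVec Xe) ^ 2 + enorm2 ((H₂ ω)ᵀ.mulVec Xe) ^ 2)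
                 ≤ 4 * (d + e : ℝ)} := by
  subst hXd hXe
  set c : ℝ := 2 * (d + e : ℝ)
  set S : Set (Matrix (Fin e) (Fin d) ℝ) :=
    {A | enorm2 (A *ᵥ fun i => X (Sum.inl i)) ≤ c ∧
      enorm2 (Aᵀ *ᵥ fun j => X (Sum.inr (Sum.inl j))) ≤ c}
  have hS : MeasurableSet S :=
    (measurableSet_le (measurable_enorm2_mulVec _) measurable_const).inter
      (measurableSet_le (measurable_enorm2_transpose_mulVec _) measurable_const)
  have hM_sub : {ω | enorm2 (zeroedOut (H₁ ω) *ᵥ X) ≤ c} ⊆ H₁ ⁻¹' S := fun ω hω =>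
    ⟨(enorm2_mulVec_le_enorm2_zeroedOut_mulVec _ _).trans hω,
      (enorm2_transpose_mulVec_le_enorm2_zeroedOut_mulVec _ _).trans hω⟩
  calc μ {ω | enorm2 (zeroedOut (H₁ ω) *ᵥ X) ≤ c} ^ 2
      ≤ μ (H₁ ⁻¹' S) ^ 2 := pow_le_pow_left' (measure_mono hM_sub) 2
    _ = μ (H₁ ⁻¹' S ∩ H₂ ⁻¹' S) := (hindep.measure_inter_preimage_eq_sq hcopy hS).symm
    _ ≤ _ := measure_mono <| by
      rintro ω ⟨⟨h₁, h₁'⟩, h₂, h₂'⟩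
      exact ⟨h₁, h₂, (sqrt_sq_add_sq_le_add (enorm2_nonneg _) (enorm2_nonneg _)).trans (by linarith)⟩

/-- tensorization: with `M` the zeroed-out matrix built from `H₁` and `M'`
an i.i.d. copy built from `H₂`, and `X` split into blocks `(X_{[d]}, X_{[d+1,m]}, rest)`,
`P(‖MX‖₂ ≤ 2m)² ≤ P(‖H₁X_{[d]}‖ ≤ 2m, ‖H₂X_{[d]}‖ ≤ 2m, ‖HᵀX_{[d+1,m]}‖ ≤ 4m)`
where `H = [H₁, H₂]` and `m = d + e`. -/
theorem stmt14
    {Ω : Type*} [MeasurableSpace Ω] (μ : Measure Ω) [IsProbabilityMeasure μ]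
    (d e k : ℕ)
    (H₁ H₂ : Ω → Matrix (Fin e) (Fin d) ℝ)
    (hmeas₁ : Measurable H₁) (hmeas₂ : Measurable H₂)
    (hindep : IndepFun H₁ H₂ μ) (hcopy : IdentDistrib H₂ H₁ μ μ)
    (X : (Fin d ⊕ (Fin e ⊕ Fin k)) → ℝ)
    (Xd : Fin d → ℝ) (hXd : Xd = fun i => X (Sum.inl i))
    (Xe : Fin e → ℝ) (hXe : Xe = fun j => X (Sum.inr (Sum.inl j))) :
    (μ {ω | enorm2 ((zeroedOut (H₁ ω)).mulVec X) ≤ 2 * (d + e : ℝ)}) ^ 2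
      ≤ μ {ω | enorm2 ((H₁ ω).mulVec Xd) ≤ 2 * (d + e : ℝ) ∧
               enorm2 ((H₂ ω).mulVec Xd) ≤ 2 * (d + e : ℝ) ∧
               Real.sqrt (enorm2 ((H₁ ω)ᵀ.mulVec Xe) ^ 2 + enorm2 ((H₂ ω)ᵀ.mulVec Xe) ^ 2)
                 ≤ 4 * (d + e : ℝ)} :=
  stmt14_general μ d e k H₁ H₂ hindep hcopy X Xd hXd Xe hXe
end
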